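/- Pseudo-conformal transformation of Φ-spinors: let t ∈ ℝ, t ≠ 0, and let U, φ₁, φ₂ : ℂ → ℂ be real-differentiable functions with U real-valued such that ∂φ₂(w) + U(w)φ₁(w) = 0 and −∂̄φ₁(w) + U(w)φ₂(w) = 0 for all w ∈ ℂ. Define Ũ(z) = (1/t)·exp(−i(z² + conj(z)²)/(8t))·U(z/t), φ̃₁(z) = exp(−i z²/(8t))·φ₁(z/t), and φ̃₂(z) = exp(i conj(z)²/(8t))·φ₂(z/t). Then for every z ∈ ℂ one has ∂φ̃₂(z) + conj(Ũ(z))·φ̃₁(z) = 0 and −∂̄φ̃₁(z) + Ũ(z)·φ̃₂(z) = 0. -/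

import Mathlib

/-!
Write `E = chirp t`, the holomorphic function `w ↦ exp (-I w² / (8t))`, so that
`φt₁ = E · φ₁ (·/t)` and `φt₂ = conj E · φ₂ (·/t)`. Since `∂̄E = 0` and
`∂(conj E) = conj (∂̄E) = 0`, the Leibniz rule and the scaling rules `∂(f (a·)) = a · ∂f (a·)`,
`∂̄(f (a·)) = conj a · ∂̄f (a·)` give `∂φt₂ = conj E · t⁻¹ ∂φ₂ (·/t)` and
`∂̄φt₁ = E · t⁻¹ ∂̄φ₁ (·/t)`. The phase factor of `Ut` is `E / conj E`, so, `U` being real,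
`conj Ut · φt₁ = conj E · t⁻¹ U φ₁ (·/t)` and `Ut · φt₂ = E · t⁻¹ U φ₂ (·/t)`: the transformed
system is the original one multiplied by `conj E / t` and `E / t` respectively.
-/

open Complex

/-- Wirtinger derivative ∂f(z) = (1/2)(Df(z)(1) − i·Df(z)(i)). -/
noncomputable def wirtingerD (f : ℂ → ℂ) (z : ℂ) : ℂ :=
  (1 / 2) * (fderiv ℝ f z 1 - Complex.I * fderiv ℝ f z Complex.I)

/-- Conjugate Wirtinger derivative ∂̄f(z) = (1/2)(Df(z)(1) + i·Df(z)(i)). -/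
noncomputable def wirtingerDBar (f : ℂ → ℂ) (z : ℂ) : ℂ :=
  (1 / 2) * (fderiv ℝ f z 1 + Complex.I * fderiv ℝ f z Complex.I)

open ComplexConjugate

section Wirtinger

variable {f g : ℂ → ℂ} {z : ℂ}

theorem apply_eq_re_smul_add_im_smul (L : ℂ →L[ℝ] ℂ) (v : ℂ) :
    L v = v.re • L 1 + v.im • L I := by
  have hv : v = v.re • (1 : ℂ) + v.im • I := by simp [real_smul]
  conv_lhs => rw [hv, map_add, map_smul, map_smul]

theorem wirtingerDBar_eq_zero_of_differentiableAt (hf : DifferentiableAt ℂ f z) :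
    wirtingerDBar f z = 0 := by
  have hI : fderiv ℂ f z I = I * fderiv ℂ f z 1 := by
    rw [← smul_eq_mul, ← map_smul, smul_eq_mul, mul_one]
  rw [wirtingerDBar, hf.fderiv_restrictScalars ℝ]
  simp only [ContinuousLinearMap.coe_restrictScalars']
  rw [hI]
  linear_combination (fderiv ℂ f z 1 / 2) * I_sq

theorem wirtingerD_conj (hf : DifferentiableAt ℝ f z) :
    wirtingerD (fun w => conj (f w)) z = conj (wirtingerDBar f z) := by
  have hconj : HasFDerivAt (fun w => conj (f w))
      (conjCLE.toContinuousLinearMap.comp (fderiv ℝ f z)) z :=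
    conjCLE.toContinuousLinearMap.hasFDerivAt.comp z hf.hasFDerivAt
  rw [wirtingerD, wirtingerDBar, hconj.fderiv]
  simp only [ContinuousLinearMap.coe_comp, Function.comp_apply,
    ContinuousLinearEquiv.coe_coe, conjCLE_apply, map_mul, map_add, map_div₀, map_one, map_ofNat,
    conj_I]
  ring

theorem wirtingerD_mul (hf : DifferentiableAt ℝ f z) (hg : DifferentiableAt ℝ g z) :
    wirtingerD (fun w => f w * g w) z = wirtingerD f z * g z + f z * wirtingerD g z := by
  rw [wirtingerD, wirtingerD, wirtingerD, fderiv_fun_mul hf hg]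
  simp only [add_apply, smul_apply, smul_eq_mul]
  ring

theorem wirtingerDBar_mul (hf : DifferentiableAt ℝ f z) (hg : DifferentiableAt ℝ g z) :
    wirtingerDBar (fun w => f w * g w) z =
      wirtingerDBar f z * g z + f z * wirtingerDBar g z := by
  rw [wirtingerDBar, wirtingerDBar, wirtingerDBar, fderiv_fun_mul hf hg]
  simp only [add_apply, smul_apply, smul_eq_mul]
  ring

theorem fderiv_comp_const_mul_apply (a : ℂ) (hf : DifferentiableAt ℝ f (a * z)) (v : ℂ) :
    fderiv ℝ (fun w => f (a * w)) z v = fderiv ℝ f (a * z) (a * v) := by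
  have hmul : HasFDerivAt (fun w : ℂ => a * w)
      ((ContinuousLinearMap.mul ℂ ℂ a).restrictScalars ℝ) z :=
    ((ContinuousLinearMap.mul ℂ ℂ a).hasFDerivAt).restrictScalars ℝ
  exact congrArg (· v) (hf.hasFDerivAt.comp z hmul).fderiv

theorem wirtingerD_comp_const_mul (a : ℂ) (hf : DifferentiableAt ℝ f (a * z)) :
    wirtingerD (fun w => f (a * w)) z = a * wirtingerD f (a * z) := by
  rw [wirtingerD, wirtingerD, fderiv_comp_const_mul_apply a hf, fderiv_comp_const_mul_apply a hf,
    apply_eq_re_smul_add_im_smul _ (a * 1), apply_eq_re_smul_add_im_smul _ (a * I)]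
  simp only [mul_one, mul_re, mul_im, I_re, I_im, real_smul]
  push_cast
  linear_combination ((fderiv ℝ f (a * z) 1 - I * fderiv ℝ f (a * z) I) / 2) * re_add_im a
    + (a.im * fderiv ℝ f (a * z) I / 2) * I_sq

theorem wirtingerDBar_comp_const_mul (a : ℂ) (hf : DifferentiableAt ℝ f (a * z)) :
    wirtingerDBar (fun w => f (a * w)) z = conj a * wirtingerDBar f (a * z) := by
  have hconj : conj a = a.re - a.im * I := by apply Complex.ext <;> simp
  rw [wirtingerDBar, wirtingerDBar, fderiv_comp_const_mul_apply a hf,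
    fderiv_comp_const_mul_apply a hf, apply_eq_re_smul_add_im_smul _ (a * 1),
    apply_eq_re_smul_add_im_smul _ (a * I)]
  simp only [mul_one, mul_re, mul_im, I_re, I_im, real_smul]
  push_cast
  linear_combination (-(fderiv ℝ f (a * z) 1 + I * fderiv ℝ f (a * z) I) / 2) * hconj
    + (a.im * fderiv ℝ f (a * z) I / 2) * I_sq

end Wirtinger

noncomputable def chirp (t : ℝ) (w : ℂ) : ℂ := exp (-I * w ^ 2 / (8 * t))

theorem differentiable_chirp (t : ℝ) : Differentiable ℂ (chirp t) := by
  unfold chirp; fun_prop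

theorem chirp_ne_zero (t : ℝ) (w : ℂ) : chirp t w ≠ 0 := exp_ne_zero _

theorem conj_chirp (t : ℝ) (w : ℂ) : conj (chirp t w) = exp (I * conj w ^ 2 / (8 * t)) := by
  rw [chirp, ← exp_conj]
  congr 1
  simp only [map_div₀, map_mul, map_neg, map_pow, conj_I, conj_ofReal, map_ofNat]
  ring

theorem chirp_div_conj_chirp (t : ℝ) (w : ℂ) :
    chirp t w / conj (chirp t w) = exp (-I * (w ^ 2 + conj w ^ 2) / (8 * t)) := by
  rw [conj_chirp, chirp, ← exp_sub]
  congr 1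
  ring

theorem stmt_3
    (t : ℝ)
    (U φ₁ φ₂ : ℂ → ℂ)
    (hφ₁diff : Differentiable ℝ φ₁)
    (hφ₂diff : Differentiable ℝ φ₂)
    (hUreal : ∀ w, (starRingEnd ℂ) (U w) = U w)
    (hdirac₁ : ∀ w, wirtingerD φ₂ w + U w * φ₁ w = 0)
    (hdirac₂ : ∀ w, -wirtingerDBar φ₁ w + U w * φ₂ w = 0)
    (Ut φt₁ φt₂ : ℂ → ℂ)
    (hUt : ∀ z, Ut z =
      (1 / (t : ℂ)) *
        Complex.exp (-Complex.I * (z ^ 2 + ((starRingEnd ℂ) z) ^ 2) / (8 * (t : ℂ))) *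
        U (z / (t : ℂ)))
    (hφt₁ : ∀ z, φt₁ z =
      Complex.exp (-Complex.I * z ^ 2 / (8 * (t : ℂ))) * φ₁ (z / (t : ℂ)))
    (hφt₂ : ∀ z, φt₂ z =
      Complex.exp (Complex.I * ((starRingEnd ℂ) z) ^ 2 / (8 * (t : ℂ))) * φ₂ (z / (t : ℂ))) :
    ∀ z : ℂ,
      wirtingerD φt₂ z + (starRingEnd ℂ) (Ut z) * φt₁ z = 0 ∧
      -wirtingerDBar φt₁ z + Ut z * φt₂ z = 0 := by
  set s : ℂ := (t : ℂ)⁻¹ with hs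
  have hs_div : ∀ w, w / (t : ℂ) = s * w := fun w => div_eq_inv_mul w _
  have hs_conj : conj s = s := by rw [hs, map_inv₀, conj_ofReal]
  have hφt₁_eq : φt₁ = fun w => chirp t w * φ₁ (s * w) := by
    funext w; rw [hφt₁, hs_div]; rfl
  have hφt₂_eq : φt₂ = fun w => conj (chirp t w) * φ₂ (s * w) := by
    funext w; rw [hφt₂, conj_chirp, hs_div]
  intro z
  have hE₀ := chirp_ne_zero t z
  have hconjE₀ : conj (chirp t z) ≠ 0 := (map_ne_zero _).mpr hE₀
  have hUtφt₁ : conj (Ut z) * φt₁ z = conj (chirp t z) * (s * (U (s * z) * φ₁ (s * z))) := by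
    rw [hUt, hφt₁_eq, ← chirp_div_conj_chirp, hs_div, hs_div, mul_one]
    simp only [map_mul, map_div₀, conj_conj, hs_conj, hUreal]
    field_simp
  have hUtφt₂ : Ut z * φt₂ z = chirp t z * (s * (U (s * z) * φ₂ (s * z))) := by
    rw [hUt, hφt₂_eq, ← chirp_div_conj_chirp, hs_div, hs_div, mul_one]
    field_simp
  have hchirp := differentiable_chirp t z
  constructor
  · rw [hφt₂_eq, wirtingerD_mul (by fun_prop) (by fun_prop), wirtingerD_conj (by fun_prop),
      wirtingerDBar_eq_zero_of_differentiableAt hchirp, map_zero,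
      wirtingerD_comp_const_mul _ (hφ₂diff _), hUtφt₁]
    linear_combination (conj (chirp t z) * s) * hdirac₁ (s * z)
  · rw [hφt₁_eq, wirtingerDBar_mul (by fun_prop) (by fun_prop),
      wirtingerDBar_eq_zero_of_differentiableAt hchirp,
      wirtingerDBar_comp_const_mul _ (hφ₁diff _), hUtφt₂, hs_conj]
    linear_combination (chirp t z * s) * hdirac₂ (s * z)
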